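/- arXiv:math-ph/0003023 — 3 statements merged into one kernel-verified Lean document; each statement's English description precedes it below -/
import Mathlib

section
/- Let $H$ be a nonnegative self-adjoint operator on a Hilbert space with a one-dimensional kernel spanned by a unit vector $\varphi_0$, and suppose $H \ge B(I-P)$ where $B>0$ and $P = |\varphi_0\rangle\langle\varphi_0|$ is the projection onto the kernel. Let $W$ be a bounded self-adjoint operator with $0 \le W \le 1/2$. If $f$ is a unit vector with $\langle f, (H+W)f\rangle = \lambda$ and $\lambda < B/2$, then $\lambda \ge \frac{B}{2(B+1)}\langle Pf, W Pf\rangle$ and $\|Pf\|^2 \ge 1 - \lambda/B$. -/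
open scoped InnerProductSpace

private lemma expand2 {E : Type*} [NormedAddCommGroup E] [InnerProductSpace ℂ E]
    (W : E →L[ℂ] E) (u g : E) :
    ⟪u + (2:ℂ) • g, W (u + (2:ℂ) • g)⟫_ℂ
      = ⟪u, W u⟫_ℂ + 2 * ⟪u, W g⟫_ℂ + 2 * ⟪g, W u⟫_ℂ + 4 * ⟪g, W g⟫_ℂ := by
  simp only [map_add, map_smul, inner_add_left, inner_add_right,
    inner_smul_left, inner_smul_right, map_ofNat]
  ring

/-- Ground-state energy lower bound: if `H ≥ 0` is self-adjoint with kernel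
spanned by the unit vector `φ0` and spectral gap `B` above `0`, and
`0 ≤ W ≤ 1/2`, then for a unit vector `f` with `λ = ⟨f,(H+W)f⟩ < B/2` we get
`λ ≥ B/(2(B+1)) ⟨Pf, W Pf⟩` and `‖Pf‖² ≥ 1 - λ/B`, where `P = |φ0⟩⟨φ0|`. -/
theorem stmt0
    {E : Type*} [NormedAddCommGroup E] [InnerProductSpace ℂ E] [CompleteSpace E]
    (H W : E →L[ℂ] E) (B : ℝ) (hB : 0 < B)
    (hHsa : ∀ x y : E, ⟪H x, y⟫_ℂ = ⟪x, H y⟫_ℂ)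
    (hWsa : ∀ x y : E, ⟪W x, y⟫_ℂ = ⟪x, W y⟫_ℂ)
    (hHnonneg : ∀ x : E, 0 ≤ (⟪x, H x⟫_ℂ).re)
    (φ0 : E) (hφ0 : ‖φ0‖ = 1) (hker : H φ0 = 0)
    (hgap : ∀ g : E, ⟪φ0, g⟫_ℂ = 0 → B * ‖g‖ ^ 2 ≤ (⟪g, H g⟫_ℂ).re)
    (hWpos : ∀ x : E, 0 ≤ (⟪x, W x⟫_ℂ).re)
    (hWle : ∀ x : E, (⟪x, W x⟫_ℂ).re ≤ (1 / 2) * ‖x‖ ^ 2)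
    (f : E) (hf : ‖f‖ = 1)
    (lam : ℝ) (hlam : lam = (⟪f, H f + W f⟫_ℂ).re) (hsmall : lam < B / 2)
    (P : E → E) (hP : ∀ x : E, P x = ⟪φ0, x⟫_ℂ • φ0) :
    B / (2 * (B + 1)) * (⟪P f, W (P f)⟫_ℂ).re ≤ lam ∧
      1 - lam / B ≤ ‖P f‖ ^ 2 := by
  set c : ℂ := ⟪φ0, f⟫_ℂ with hc
  set u : E := c • φ0 with hu
  set g : E := f - u with hgdef
  have hfu : f = u + g := by rw [hgdef]; abel
  have hφφ : (⟪φ0, φ0⟫_ℂ) = 1 := by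
    rw [inner_self_eq_norm_sq_to_K, hφ0]; norm_num
  have hφg : ⟪φ0, g⟫_ℂ = 0 := by
    simp [hgdef, hu, inner_sub_right, inner_smul_right, hφφ, hc, hφ0]
  have hug : ⟪u, g⟫_ℂ = 0 := by
    simp [hu, inner_smul_left, hφg]
  have hPf : P f = u := by rw [hP]
  have hHu : H u = 0 := by simp [hu, map_smul, hker]
  have hnormu : ‖u‖ ^ 2 + ‖g‖ ^ 2 = 1 := by
    have h := norm_add_sq (𝕜 := ℂ) u g
    rw [← hfu, hf, hug] at h
    simp at h
    linarith [h]
  -- H part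
  have hH : (⟪f, H f⟫_ℂ).re = (⟪g, H g⟫_ℂ).re := by
    have h1 : H f = H g := by rw [hfu, map_add, hHu, zero_add]
    have h2 : ⟪u, H g⟫_ℂ = 0 := by rw [← hHsa u g, hHu, inner_zero_left]
    rw [h1, hfu, inner_add_left, h2, zero_add]
  set a2 : ℝ := (⟪u, W u⟫_ℂ).re with ha2
  set b2 : ℝ := (⟪g, W g⟫_ℂ).re with hb2
  set r : ℝ := (⟪u, W g⟫_ℂ).re with hr
  have hgu : (⟪g, W u⟫_ℂ).re = r := by
    rw [← hWsa g u, ← inner_conj_symm, Complex.conj_re]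
  have hW : (⟪f, W f⟫_ℂ).re = a2 + 2 * r + b2 := by
    rw [hfu, map_add, inner_add_left, inner_add_right, inner_add_right]
    simp only [Complex.add_re]
    rw [hgu]; ring
  have hlam' : lam = (⟪g, H g⟫_ℂ).re + (a2 + 2 * r + b2) := by
    rw [hlam, inner_add_right, Complex.add_re, hH, hW]
  -- positivity at u + 2g
  have hpos : 0 ≤ a2 + 4 * r + 4 * b2 := by
    have h := hWpos (u + (2:ℂ) • g)
    rw [expand2] at h
    simp only [Complex.add_re, Complex.mul_re, Complex.re_ofNat, Complex.im_ofNat] at h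
    rw [hgu] at h
    linarith
  have hgH : B * ‖g‖ ^ 2 ≤ (⟪g, H g⟫_ℂ).re := hgap g hφg
  have hWg : b2 ≤ (1/2) * ‖g‖ ^ 2 := hWle g
  have hWf : 0 ≤ a2 + 2 * r + b2 := by rw [← hW]; exact hWpos f
  have hlg : B * ‖g‖ ^ 2 ≤ lam := by rw [hlam']; linarith
  have hlam0 : 0 ≤ lam := le_trans (by positivity) hlg
  constructor
  · rw [hPf, ← ha2, div_mul_eq_mul_div, div_le_iff₀ (by linarith)]
    have key : a2 ≤ 2 * lam - 2 * B * ‖g‖ ^ 2 + ‖g‖ ^ 2 := by linarith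
    nlinarith [mul_le_mul_of_nonneg_left key hB.le, hlg, hlam0,
      mul_nonneg (mul_nonneg hB.le hB.le) (sq_nonneg ‖g‖)]
  · rw [hPf]
    have h1 : ‖g‖ ^ 2 ≤ lam / B := (le_div_iff₀' hB).mpr hlg
    linarith
end

section
/- Let $b, c > 0$ and $R > 0$. Then $\int_{\mathbb{R}^2} e^{-b(R-|x|)^2} e^{-c|x|^2}\,dx \ge C(b,c)\, e^{-\frac{bc}{b+c}R^2}$ for some constant $C(b,c) > 0$ independent of $R$. In particular, with $b = 1/L^2$ and $c = B/2$, the exponent is $-R^2/(L^2 + 2B^{-1})$. -/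
/-!
Completing the square in `s = ‖x‖`,
`b (R - s)² + c s² = (b + c) (s - r)² + bc/(b+c) R²` with `r = bR/(b+c)`,
so the integrand is at least `e^{-(b+c)} e^{-bc/(b+c) R²}` on the unit ball around any
point of norm `r`. That ball has the same volume for every `R`, which gives the constant.
-/

open MeasureTheory Real Metric

lemma mul_sq_sub_add_mul_sq {b c : ℝ} (hbc : b + c ≠ 0) (R s : ℝ) :
    b * (R - s) ^ 2 + c * s ^ 2 =
      (b + c) * (s - b * R / (b + c)) ^ 2 + b * c / (b + c) * R ^ 2 := by
  field_simp
  ring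

lemma exp_mul_exp_le_exp_mul_exp_of_abs_sub_le {b c : ℝ} (hbc : 0 < b + c) {R s : ℝ}
    (hs : |s - b * R / (b + c)| ≤ 1) :
    exp (-(b + c)) * exp (-(b * c / (b + c)) * R ^ 2) ≤
      exp (-b * (R - s) ^ 2) * exp (-c * s ^ 2) := by
  have hsq : (s - b * R / (b + c)) ^ 2 ≤ 1 := by
    simpa using (sq_le_one_iff_abs_le_one _).mpr hs
  have key := mul_sq_sub_add_mul_sq hbc.ne' R s
  rw [← exp_add, ← exp_add, exp_le_exp]
  nlinarith

lemma const_mul_measureReal_le_integral {X : Type*} [MeasurableSpace X] {μ : Measure X}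
    {f : X → ℝ} {s : Set X} {m : ℝ} (hf : Integrable f μ) (hf0 : 0 ≤ f)
    (hs : MeasurableSet s) (hμs : μ s ≠ ⊤) (hm : ∀ x ∈ s, m ≤ f x) :
    m * μ.real s ≤ ∫ x, f x ∂μ :=
  (setIntegral_ge_of_const_le_real hs hμs hm hf.integrableOn).trans
    (setIntegral_le_integral hf (Filter.Eventually.of_forall hf0))

section InnerProductSpace

variable {V : Type*} [NormedAddCommGroup V] [InnerProductSpace ℝ V] [FiniteDimensional ℝ V]
  [MeasurableSpace V] [BorelSpace V]

lemma integrable_exp_neg_mul_sq_norm {c : ℝ} (hc : 0 < c) :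
    Integrable (fun x : V ↦ exp (-c * ‖x‖ ^ 2)) := by
  have h := (GaussianFourier.integrable_cexp_neg_mul_sq_norm_add (V := V)
    (b := c) (by simpa using hc) 0 0).re
  refine h.congr (Filter.Eventually.of_forall fun x ↦ ?_)
  simp only [zero_mul, add_zero, RCLike.re_to_complex]
  rw [← Complex.ofReal_pow, ← Complex.ofReal_neg, ← Complex.ofReal_mul, ← Complex.ofReal_exp,
    Complex.ofReal_re]

lemma integrable_exp_neg_mul_sq_sub_norm_mul_exp {b c : ℝ} (hb : 0 ≤ b) (hc : 0 < c) (R : ℝ) :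
    Integrable (fun x : V ↦ exp (-b * (R - ‖x‖) ^ 2) * exp (-c * ‖x‖ ^ 2)) := by
  refine (integrable_exp_neg_mul_sq_norm hc).bdd_mul (c := 1) (by fun_prop)
    (Filter.Eventually.of_forall fun x ↦ ?_)
  rw [norm_of_nonneg (exp_pos _).le, exp_le_one_iff]
  nlinarith [sq_nonneg (R - ‖x‖)]

variable [Nontrivial V]

theorem exists_pos_const_mul_exp_le_integral_exp_mul_exp {b c : ℝ} (hb : 0 ≤ b) (hc : 0 < c) :
    ∃ C : ℝ, 0 < C ∧ ∀ R : ℝ, 0 ≤ R →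
      C * exp (-(b * c / (b + c)) * R ^ 2) ≤
        ∫ x : V, exp (-b * (R - ‖x‖) ^ 2) * exp (-c * ‖x‖ ^ 2) := by
  have hbc : 0 < b + c := by linarith
  refine ⟨volume.real (ball (0 : V) 1) * exp (-(b + c)),
    mul_pos (ENNReal.toReal_pos (measure_ball_pos _ _ one_pos).ne' measure_ball_lt_top.ne)
      (exp_pos _), fun R hR ↦ ?_⟩
  obtain ⟨x₀, hx₀⟩ := exists_norm_eq V (by positivity : 0 ≤ b * R / (b + c))
  have hm : ∀ x ∈ ball x₀ 1, exp (-(b + c)) * exp (-(b * c / (b + c)) * R ^ 2) ≤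
      exp (-b * (R - ‖x‖) ^ 2) * exp (-c * ‖x‖ ^ 2) := fun x hx ↦
    exp_mul_exp_le_exp_mul_exp_of_abs_sub_le hbc <|
      hx₀ ▸ (abs_norm_sub_norm_le x x₀).trans (mem_ball_iff_norm.mp hx).le
  have hvol : volume.real (ball x₀ 1) = volume.real (ball (0 : V) 1) := by
    simp only [Measure.real, Measure.addHaar_ball_center]
  calc _ = exp (-(b + c)) * exp (-(b * c / (b + c)) * R ^ 2) * volume.real (ball x₀ 1) := by
        rw [hvol]; ring
    _ ≤ _ := const_mul_measureReal_le_integral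
        (integrable_exp_neg_mul_sq_sub_norm_mul_exp hb hc R) (fun x ↦ by positivity)
        measurableSet_ball measure_ball_lt_top.ne hm

end InnerProductSpace

/-- Gaussian interplay integral: for `b, c > 0` there is `C(b,c) > 0` such that
for all `R > 0`,
`∫_{ℝ²} e^{-b(R-|x|)²} e^{-c|x|²} dx ≥ C e^{-(bc/(b+c)) R²}`. -/
theorem stmt1 (b c : ℝ) (hb : 0 < b) (hc : 0 < c) :
    ∃ C : ℝ, 0 < C ∧ ∀ R : ℝ, 0 < R →
      C * Real.exp (-(b * c / (b + c)) * R ^ 2) ≤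
        ∫ x : EuclideanSpace ℝ (Fin 2),
          Real.exp (-b * (R - ‖x‖) ^ 2) * Real.exp (-c * ‖x‖ ^ 2) := by
  obtain ⟨C, hC, hbound⟩ :=
    exists_pos_const_mul_exp_le_integral_exp_mul_exp (V := EuclideanSpace ℝ (Fin 2)) hb.le hc
  exact ⟨C, hC, fun R hR ↦ hbound R hR.le⟩
end

section
/- With $\varphi_0(x) = \sqrt{\frac{B}{2\pi}} e^{-B|x|^2/4}$ and $W_\eta(x) = \frac{1}{2}\exp\left(-(1+\eta^{-1}) - \frac{(R-|x|)^2}{L^2}(1+\eta)\right)$ for $|x| \le R$, one has $\int_{|x|\le R} W_\eta(x)|\varphi_0(x)|^2\,dx \ge C(B, L, \eta)\, \exp\left(-(1+\eta^{-1}) - \frac{R^2}{L^2 + 2B^{-1}}(1+\eta)\right)$ for some constant $C(B,L,\eta) > 0$ independent of $R \ge 1$. -/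
/-!
With `a = (1+η)/L²` and `b = B/2` the integrand is `B/(4π) e^{-(1+η⁻¹)} e^{-(a(R-r)² + b r²)}`,
`r = ‖x‖`. Completing the square, `a(R-r)² + b r² = ab/(a+b) R² + (a+b)(r - r₀)²` with
`r₀ = aR/(a+b)`. On the closed ball of fixed radius `ρ = b/(a+b)` around a point of norm `r₀`,
which lies in the disc of radius `R` as soon as `R ≥ 1`, the integrand is therefore at least a
constant multiple of `e^{-ab/(a+b) R²}`; and `ab/(a+b) ≤ (1+η)/(L²+2B⁻¹)`.
-/

open MeasureTheory Real Metric

theorem mul_sq_sub_add_mul_sq_eq (a b R r : ℝ) (hab : a + b ≠ 0) :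
    a * (R - r) ^ 2 + b * r ^ 2 = (a + b) * (r - a * R / (a + b)) ^ 2 + a * b / (a + b) * R ^ 2 := by
  field_simp
  ring

theorem mul_sq_sub_add_mul_sq_le {a b R r ρ : ℝ} (hab : 0 < a + b) (hr : |r - a * R / (a + b)| ≤ ρ) :
    a * (R - r) ^ 2 + b * r ^ 2 ≤ a * b / (a + b) * R ^ 2 + (a + b) * ρ ^ 2 := by
  have hsq : (r - a * R / (a + b)) ^ 2 ≤ ρ ^ 2 := by
    simpa only [sq_abs] using pow_le_pow_left₀ (abs_nonneg _) hr 2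
  rw [mul_sq_sub_add_mul_sq_eq a b R r hab.ne']
  nlinarith

theorem gaussian_rate_mul_sq_le {B L η : ℝ} (hB : 0 < B) (hL : 0 < L) (hη : 0 ≤ η) (R : ℝ) :
    (1 + η) / L ^ 2 * (B / 2) / ((1 + η) / L ^ 2 + B / 2) * R ^ 2 ≤
      R ^ 2 / (L ^ 2 + 2 * B⁻¹) * (1 + η) := by
  have hL2 : 0 < L ^ 2 := by positivity
  have hrate : (1 + η) / L ^ 2 * (B / 2) / ((1 + η) / L ^ 2 + B / 2) ≤
      (1 + η) / (L ^ 2 + 2 * B⁻¹) := by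
    rw [div_le_div_iff₀ (by positivity) (by positivity)]
    field_simp
    nlinarith [mul_nonneg (mul_nonneg hB.le hL2.le) hη, mul_nonneg hη hη]
  calc _ ≤ (1 + η) / (L ^ 2 + 2 * B⁻¹) * R ^ 2 := by gcongr
    _ = R ^ 2 / (L ^ 2 + 2 * B⁻¹) * (1 + η) := by ring

theorem half_exp_mul_gaussian_eq (B L η R r : ℝ) :
    (1 / 2 * exp (-(1 + η⁻¹) - (R - r) ^ 2 / L ^ 2 * (1 + η))) * (B / (2 * π) * exp (-B * r ^ 2 / 2))
      = B / (4 * π) * exp (-(1 + η⁻¹) - ((1 + η) / L ^ 2 * (R - r) ^ 2 + B / 2 * r ^ 2)) := by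
  rw [show -(1 + η⁻¹) - ((1 + η) / L ^ 2 * (R - r) ^ 2 + B / 2 * r ^ 2)
      = (-(1 + η⁻¹) - (R - r) ^ 2 / L ^ 2 * (1 + η)) + -B * r ^ 2 / 2 by ring, exp_add]
  ring

/-- The shell `|‖x‖ - r₀| ≤ ρ` contains a translate of `closedBall 0 ρ`. -/
theorem mul_measureReal_closedBall_le_setIntegral_radial {E : Type*} [NormedAddCommGroup E]
    [NormedSpace ℝ E] [Nontrivial E] [FiniteDimensional ℝ E] [MeasurableSpace E] [BorelSpace E]
    (μ : Measure E) [μ.IsAddHaarMeasure] {g : ℝ → ℝ} (hg : Continuous g) (hg0 : ∀ r, 0 ≤ g r)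
    {r₀ ρ R M : ℝ} (hr₀ : 0 ≤ r₀) (hR : r₀ + ρ ≤ R) (hM : ∀ r, |r - r₀| ≤ ρ → M ≤ g r) :
    M * μ.real (closedBall 0 ρ) ≤ ∫ x in closedBall (0 : E) R, g ‖x‖ ∂μ := by
  obtain ⟨x₀, hx₀⟩ := exists_norm_eq E hr₀
  have hsub : closedBall x₀ ρ ⊆ closedBall 0 R := by
    intro x hx
    rw [mem_closedBall, dist_eq_norm] at hx
    rw [mem_closedBall, dist_zero_right]
    linarith [norm_le_norm_add_norm_sub' x x₀]
  have hint : IntegrableOn (fun x => g ‖x‖) (closedBall (0 : E) R) μ :=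
    (hg.comp continuous_norm).continuousOn.integrableOn_compact (isCompact_closedBall _ _)
  calc M * μ.real (closedBall 0 ρ) = M * μ.real (closedBall x₀ ρ) := by
        rw [Measure.addHaar_real_closedBall_center μ x₀]
    _ ≤ ∫ x in closedBall x₀ ρ, g ‖x‖ ∂μ := by
        refine setIntegral_ge_of_const_le_real measurableSet_closedBall
          measure_closedBall_lt_top.ne (fun x hx => hM _ ?_) (hint.mono_set hsub)
        rw [← hx₀]
        exact (abs_norm_sub_norm_le x x₀).trans (mem_closedBall_iff_norm.mp hx)
    _ ≤ ∫ x in closedBall 0 R, g ‖x‖ ∂μ :=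
        setIntegral_mono_set hint (.of_forall fun _ => hg0 _) hsub.eventuallyLE

/-- Lower bound on the interaction of the Gaussian ground state with the
Gaussian boundary potential `W_η`: there is `C(B,L,η) > 0` so that for all
`R ≥ 1`,
`∫_{|x|≤R} W_η |φ₀|² ≥ C exp(-(1+η⁻¹) - R²(1+η)/(L²+2B⁻¹))`. -/
theorem stmt9 (B L η : ℝ) (hB : 0 < B) (hL : 0 < L) (hη : 0 < η) :
    ∃ C : ℝ, 0 < C ∧ ∀ R : ℝ, 1 ≤ R →
      C * Real.exp (-(1 + η⁻¹) - R ^ 2 / (L ^ 2 + 2 * B⁻¹) * (1 + η)) ≤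
        ∫ x in Metric.closedBall (0 : EuclideanSpace ℝ (Fin 2)) R,
          ((1 / 2) * Real.exp (-(1 + η⁻¹) - (R - ‖x‖) ^ 2 / L ^ 2 * (1 + η))) *
            (B / (2 * Real.pi) * Real.exp (-B * ‖x‖ ^ 2 / 2)) := by
  set a := (1 + η) / L ^ 2
  set b := B / 2
  have hab : 0 < a + b := by positivity
  set ρ := b / (a + b)
  have hρ : 0 < ρ := by positivity
  refine ⟨B / (4 * π) * exp (-((a + b) * ρ ^ 2)) *
      volume.real (closedBall (0 : EuclideanSpace ℝ (Fin 2)) ρ), ?_, fun R hR => ?_⟩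
  · have hV : 0 < volume.real (closedBall (0 : EuclideanSpace ℝ (Fin 2)) ρ) :=
      ENNReal.toReal_pos (measure_closedBall_pos volume _ hρ).ne' measure_closedBall_lt_top.ne
    positivity
  have hr₀ : 0 ≤ a * R / (a + b) := by positivity
  have hr₀R : a * R / (a + b) + ρ ≤ R := by
    rw [← add_div, div_le_iff₀ hab]
    nlinarith [show (0 : ℝ) < b by positivity]
  refine le_of_eq_of_le ?_ (mul_measureReal_closedBall_le_setIntegral_radial volume
    (g := fun r => ((1 / 2) * exp (-(1 + η⁻¹) - (R - r) ^ 2 / L ^ 2 * (1 + η))) *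
      (B / (2 * π) * exp (-B * r ^ 2 / 2))) (by fun_prop) (fun r => by positivity) hr₀ hr₀R
    (M := B / (4 * π) * exp (-((a + b) * ρ ^ 2) +
      (-(1 + η⁻¹) - R ^ 2 / (L ^ 2 + 2 * B⁻¹) * (1 + η)))) fun r hr => ?_)
  · rw [exp_add]
    ring
  · rw [half_exp_mul_gaussian_eq B L η R r]
    gcongr _ * exp ?_
    show _ ≤ -(1 + η⁻¹) - (a * (R - r) ^ 2 + b * r ^ 2)
    linarith [mul_sq_sub_add_mul_sq_le hab hr, gaussian_rate_mul_sq_le hB hL hη.le R]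
end
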